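/- Let w be a Baxter permutation of length n and let w' of length n+1 be obtained by inserting a new largest label n+1 at a position p such that w' is again a Baxter permutation. Then des(w') − ides(w') = des(w) − ides(w), where des denotes the number of descents and ides the number of inverse descents. More precisely, if p ≤ n and w(p) is a left-to-right maximum of w then des(w') = des(w)+1 and ides(w') = ides(w)+1, while if p ≥ 2 and w(p−1) is a right-to-left maximum of w then des(w') = des(w) and ides(w') = ides(w). -/

import Mathlib

/-- The entry of the word `l` at (1-indexed) position `i`, i.e. `w(i)`. -/
def entry (l : List ℕ) (i : ℕ) : ℕ := l.getD (i - 1) 0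

/-- `l` is the one-line notation of a permutation of `{1,…,n}`. -/
def IsPermWord (n : ℕ) (l : List ℕ) : Prop := l.Perm (List.range' 1 n)

/-- `l` is a Baxter permutation of length `n`: a permutation of `{1,…,n}`
avoiding the vincular patterns 3-14-2 and 2-41-3. -/
def IsBaxter (n : ℕ) (l : List ℕ) : Prop :=
  IsPermWord n l ∧
  (¬ ∃ i j k, 1 ≤ i ∧ i < j ∧ j + 1 < k ∧ k ≤ n ∧
      entry l j < entry l k ∧ entry l k < entry l i ∧ entry l i < entry l (j + 1)) ∧
  (¬ ∃ i j k, 1 ≤ i ∧ i < j ∧ j + 1 < k ∧ k ≤ n ∧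
      entry l (j + 1) < entry l i ∧ entry l i < entry l k ∧ entry l k < entry l j)

/-- `l` is fixed under quarter-turn (90°) rotation of its permutation matrix:
`w(w(i)) = n+1-i` for all `i ∈ {1,…,n}`. -/
def QuarterFixed (n : ℕ) (l : List ℕ) : Prop :=
  ∀ i, 1 ≤ i → i ≤ n → entry l (entry l i) = n + 1 - i

/-- `l` is fixed under half-turn (180°) rotation of its permutation matrix:
`w(n+1-i) = n+1-w(i)` for all `i ∈ {1,…,n}`. -/
def HalfFixed (n : ℕ) (l : List ℕ) : Prop :=
  ∀ i, 1 ≤ i → i ≤ n → entry l (n + 1 - i) = n + 1 - entry l i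

/-- The entry at position `i` is a left-to-right maximum. -/
def LRMaxAt (l : List ℕ) (i : ℕ) : Prop := ∀ k, 1 ≤ k → k < i → entry l k < entry l i

/-- The entry at position `i` is a right-to-left maximum. -/
def RLMaxAt (n : ℕ) (l : List ℕ) (i : ℕ) : Prop := ∀ k, i < k → k ≤ n → entry l k < entry l i

/-- The entry at position `i` is a left-to-right minimum. -/
def LRMinAt (l : List ℕ) (i : ℕ) : Prop := ∀ k, 1 ≤ k → k < i → entry l i < entry l k

/-- The entry at position `i` is a right-to-left minimum. -/
def RLMinAt (n : ℕ) (l : List ℕ) (i : ℕ) : Prop := ∀ k, i < k → k ≤ n → entry l i < entry l k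

/-- The (1-indexed) position of the value `v` in `l`, i.e. `w⁻¹(v)`. -/
def pos (l : List ℕ) (v : ℕ) : ℕ := l.idxOf v + 1

/-- The one-line notation of the inverse of the permutation `l` of `{1,…,n}`. -/
def invWord (n : ℕ) (l : List ℕ) : List ℕ := (List.range' 1 n).map (pos l)

/-- The number of descents of a permutation word of length `n`:
indices `i ∈ {1,…,n-1}` with `w(i) > w(i+1)`. -/
noncomputable def des (n : ℕ) (l : List ℕ) : ℕ :=
  {i : ℕ | 1 ≤ i ∧ i + 1 ≤ n ∧ entry l (i + 1) < entry l i}.ncard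

/-- Insert a new largest label `n+1` at (1-indexed) position `p`
in the permutation `l` of `{1,…,n}`. -/
def insertMax (n p : ℕ) (l : List ℕ) : List ℕ := l.insertIdx (p - 1) (n + 1)

/-- Insert a new smallest label `1` at (1-indexed) position `p`
(all old labels get increased by 1). -/
def insertMin (p : ℕ) (l : List ℕ) : List ℕ := (l.map (· + 1)).insertIdx (p - 1) 1

/-- Append the value `j` at the end of the permutation `l`
(old labels `≥ j` get increased by 1). -/
def appendEnd (j : ℕ) (l : List ℕ) : List ℕ :=
  (l.map (fun x => if x < j then x else x + 1)) ++ [j]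

/-- Standardize a word with distinct entries: replace the entries by `1,…,m` preserving
relative order (each entry is replaced by the number of entries less than or equal to it). -/
def standardize (l : List ℕ) : List ℕ := l.map (fun x => (l.filter (fun y => y ≤ x)).length)

/-!
Inserting `n + 1` at position `p` creates a descent at `p` (when `p ≤ n`) and destroys the
descent at `p - 1` if `w` had one; all other adjacent comparisons are merely shifted. In the
inverse word the positions of `1, …, n` are shifted monotonically, so the only new comparison is
between `n` and `n + 1`: an inverse descent exactly when `p ≤ w⁻¹(n)`. Baxter avoidance in `w'`
links the two, with `n + 1` as the `4` of the pattern: a descent of `w` at `p - 1` with `n` to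
the right of `p` gives a `2-41-3`, an ascent at `p - 1` with `n` left of `p - 1` a `3-14-2`. Hence
`w` has a descent at `p - 1` iff `w⁻¹(n) < p`, and `des` and `ides` change by the same amount.
-/

open Finset

def succAbove (p i : ℕ) : ℕ := if i < p then i else i + 1

lemma succAbove_of_lt {p i : ℕ} (h : i < p) : succAbove p i = i := if_pos h

lemma succAbove_of_le {p i : ℕ} (h : p ≤ i) : succAbove p i = i + 1 := if_neg (Nat.not_lt.2 h)

lemma strictMono_succAbove (p : ℕ) : StrictMono (succAbove p) :=
  strictMono_nat_of_lt_succ fun i => by unfold succAbove; split_ifs <;> omega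

lemma le_succAbove (p i : ℕ) : i ≤ succAbove p i := by
  unfold succAbove; split_ifs <;> omega

lemma succAbove_le_succ (p i : ℕ) : succAbove p i ≤ i + 1 := by
  unfold succAbove; split_ifs <;> omega

lemma lt_succAbove_iff {p i : ℕ} : p < succAbove p i ↔ p ≤ i := by
  unfold succAbove; split_ifs <;> omega

lemma one_le_pos (l : List ℕ) (v : ℕ) : 1 ≤ pos l v := Nat.le_add_left 1 _

section Entry

variable {l : List ℕ}

lemma entry_mem {i : ℕ} (h1 : 1 ≤ i) (h2 : i ≤ l.length) : entry l i ∈ l := by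
  unfold entry
  rw [List.getD_eq_getElem _ _ (by omega)]
  exact List.getElem_mem _

lemma pos_le_length {v : ℕ} (h : v ∈ l) : pos l v ≤ l.length :=
  List.idxOf_lt_length_iff.2 h

lemma entry_pos {v : ℕ} (h : v ∈ l) : entry l (pos l v) = v := by
  simp [entry, pos, List.getD_eq_getElem?_getD, List.getElem?_idxOf h]

lemma pos_entry (hl : l.Nodup) {j : ℕ} (h1 : 1 ≤ j) (h2 : j ≤ l.length) :
    pos l (entry l j) = j := by
  unfold entry pos
  rw [List.getD_eq_getElem _ _ (by omega), hl.idxOf_getElem]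
  omega

lemma entry_invWord {m i : ℕ} (h1 : 1 ≤ i) (h2 : i ≤ m) :
    entry (invWord m l) i = pos l i := by
  unfold entry invWord
  rw [List.getD_eq_getElem _ _ (by simp; omega), List.getElem_map, List.getElem_range']
  congr 1
  omega

end Entry

namespace IsPermWord

variable {n : ℕ} {l : List ℕ}

lemma length_eq (hl : IsPermWord n l) : l.length = n := by simpa using List.Perm.length_eq hl

lemma nodup (hl : IsPermWord n l) : l.Nodup := List.Perm.nodup_iff hl |>.2 List.nodup_range'

lemma mem_iff (hl : IsPermWord n l) {x : ℕ} : x ∈ l ↔ 1 ≤ x ∧ x ≤ n := by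
  rw [List.Perm.mem_iff hl, List.mem_range'_1]
  omega

lemma entry_le (hl : IsPermWord n l) {i : ℕ} (h1 : 1 ≤ i) (h2 : i ≤ n) : entry l i ≤ n :=
  (hl.mem_iff.1 (entry_mem h1 (hl.length_eq ▸ h2))).2

lemma entry_pos_max (hl : IsPermWord n l) (hn : 1 ≤ n) : entry l (pos l n) = n :=
  entry_pos (hl.mem_iff.2 ⟨hn, le_rfl⟩)

lemma pos_le (hl : IsPermWord n l) {v : ℕ} (h1 : 1 ≤ v) (h2 : v ≤ n) : pos l v ≤ n :=
  hl.length_eq ▸ pos_le_length (hl.mem_iff.2 ⟨h1, h2⟩)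

lemma entry_inj (hl : IsPermWord n l) {i j : ℕ} (hi1 : 1 ≤ i) (hi2 : i ≤ n) (hj1 : 1 ≤ j)
    (hj2 : j ≤ n) (h : entry l i = entry l j) : i = j := by
  rw [← pos_entry hl.nodup hi1 (hl.length_eq ▸ hi2), h,
    pos_entry hl.nodup hj1 (hl.length_eq ▸ hj2)]

lemma entry_lt_of_ne_pos (hl : IsPermWord n l) {i : ℕ} (h1 : 1 ≤ i) (h2 : i ≤ n)
    (hi : i ≠ pos l n) : entry l i < n := by
  have hn : 1 ≤ n := h1.trans h2
  refine (hl.entry_le h1 h2).lt_of_ne fun h => hi ?_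
  rw [← hl.entry_pos_max hn] at h
  exact hl.entry_inj h1 h2 (one_le_pos l _) (hl.pos_le hn le_rfl) h

lemma le_pos_of_lrMaxAt (hl : IsPermWord n l) {i : ℕ} (hi1 : 1 ≤ i) (hi2 : i ≤ n)
    (hmax : LRMaxAt l i) : i ≤ pos l n := by
  by_contra! h
  have := hmax (pos l n) (one_le_pos l _) h
  rw [hl.entry_pos_max (hi1.trans hi2)] at this
  exact absurd (hl.entry_le hi1 hi2) (by omega)

lemma pos_le_of_rlMaxAt (hl : IsPermWord n l) {i : ℕ} (hi1 : 1 ≤ i) (hi2 : i ≤ n)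
    (hmax : RLMaxAt n l i) : pos l n ≤ i := by
  by_contra! h
  have := hmax (pos l n) h (hl.pos_le (hi1.trans hi2) le_rfl)
  rw [hl.entry_pos_max (hi1.trans hi2)] at this
  exact absurd (hl.entry_le hi1 hi2) (by omega)

end IsPermWord

lemma des_eq_card (m : ℕ) (l : List ℕ) :
    des m l = #{i ∈ Ico 1 m | entry l (i + 1) < entry l i} := by
  rw [des, ← Set.ncard_coe_finset]
  congr 1
  ext i
  simp only [Set.mem_ofPred_eq, coe_filter, mem_Ico]
  omega

lemma des_succ (m : ℕ) (l : List ℕ) :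
    des (m + 1) l = des m l + if 1 ≤ m ∧ entry l (m + 1) < entry l m then 1 else 0 := by
  rcases Nat.eq_zero_or_pos m with rfl | hm
  · simp [des_eq_card]
  rw [des_eq_card, des_eq_card, Nat.Ico_succ_right_eq_insert_Ico hm, filter_insert]
  simp only [show 1 ≤ m from hm, true_and]
  split_ifs
  · exact card_insert_of_notMem (by simp)
  · rfl

lemma des_congr_of_strictMono {m : ℕ} {u v : List ℕ} {σ : ℕ → ℕ} (hσ : StrictMono σ)
    (h : ∀ i, 1 ≤ i → i ≤ m → entry u i = σ (entry v i)) : des m u = des m v := by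
  unfold des
  congr 1
  ext i
  simp only [Set.mem_ofPred_eq]
  constructor <;> rintro ⟨h1, h2, h3⟩ <;> refine ⟨h1, h2, ?_⟩
  · rwa [h i h1 (by omega), h (i + 1) (by omega) h2, hσ.lt_iff_lt] at h3
  · rwa [h i h1 (by omega), h (i + 1) (by omega) h2, hσ.lt_iff_lt]

section InsertMax

variable {n p : ℕ} {l : List ℕ}

lemma entry_insertMax_succAbove (hp : 1 ≤ p) {i : ℕ} (hi : 1 ≤ i) :
    entry (insertMax n p l) (succAbove p i) = entry l i := by
  unfold entry insertMax succAbove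
  simp only [List.getD_eq_getElem?_getD, List.getElem?_insertIdx]
  split_ifs <;> first | omega | rfl

lemma entry_insertMax_of_lt {i : ℕ} (hi : 1 ≤ i) (h : i < p) :
    entry (insertMax n p l) i = entry l i := by
  simpa only [succAbove_of_lt h] using
    entry_insertMax_succAbove (n := n) (p := p) (l := l) (by omega) hi

lemma entry_insertMax_succ (hp : 1 ≤ p) {i : ℕ} (h : p ≤ i) :
    entry (insertMax n p l) (i + 1) = entry l i := by
  simpa only [succAbove_of_le h] using
    entry_insertMax_succAbove (n := n) (l := l) hp (hp.trans h)

lemma entry_insertMax_self (hp1 : 1 ≤ p) (hp2 : p ≤ l.length + 1) :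
    entry (insertMax n p l) p = n + 1 := by
  unfold entry insertMax
  simp only [List.getD_eq_getElem?_getD, List.getElem?_insertIdx_self]
  rw [if_pos (by omega), Option.getD_some]

lemma length_insertMax (hp : p ≤ l.length + 1) : (insertMax n p l).length = l.length + 1 :=
  List.length_insertIdx_of_le_length (by omega) _

lemma pos_insertMax_self (hnd : (insertMax n p l).Nodup) (hp1 : 1 ≤ p)
    (hp2 : p ≤ l.length + 1) : pos (insertMax n p l) (n + 1) = p := by
  rw [← entry_insertMax_self hp1 hp2, pos_entry hnd hp1 (by rw [length_insertMax hp2]; omega)]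

lemma pos_insertMax (hnd : (insertMax n p l).Nodup) (hp1 : 1 ≤ p) (hp2 : p ≤ l.length + 1)
    {v : ℕ} (hv : v ∈ l) : pos (insertMax n p l) v = succAbove p (pos l v) := by
  have h1 := one_le_pos l v
  conv_lhs => rw [← entry_pos hv, ← entry_insertMax_succAbove (n := n) hp1 h1]
  refine pos_entry hnd (h1.trans (le_succAbove p _)) ?_
  rw [length_insertMax hp2]
  exact (succAbove_le_succ p _).trans (Nat.succ_le_succ (pos_le_length hv))

lemma des_insertMax_of_lt {m : ℕ} (hm : m < p) : des m (insertMax n p l) = des m l :=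
  des_congr_of_strictMono strictMono_id fun _ hi h => entry_insertMax_of_lt hi (by omega)

lemma des_insertMax_end (hl : IsPermWord n l) :
    des (n + 1) (insertMax n (n + 1) l) = des n l := by
  rw [des_succ, des_insertMax_of_lt (Nat.lt_succ_self n), if_neg, add_zero]
  rintro ⟨hn, hlt⟩
  rw [entry_insertMax_self (by omega) (by rw [hl.length_eq]),
    entry_insertMax_of_lt hn (Nat.lt_succ_self n)] at hlt
  exact absurd (hl.entry_le hn le_rfl) (by omega)

lemma des_insertMax_of_le (hl : IsPermWord n l) (hp1 : 1 ≤ p) (hpn : p ≤ n) :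
    des (n + 1) (insertMax n p l) + (if 2 ≤ p ∧ entry l p < entry l (p - 1) then 1 else 0)
      = des n l + 1 := by
  obtain ⟨q, rfl⟩ : ∃ q, p = q + 1 := ⟨p - 1, by omega⟩
  simp only [Nat.add_sub_cancel, Nat.reduceLeDiff]
  have hself := entry_insertMax_self (n := n) hp1 (by rw [hl.length_eq]; omega)
  suffices ∀ m, q + 1 ≤ m → m ≤ n → des (m + 1) (insertMax n (q + 1) l)
      + (if 1 ≤ q ∧ entry l (q + 1) < entry l q then 1 else 0) = des m l + 1 from
    this n hpn le_rfl
  intro m hm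
  induction m, hm using Nat.le_induction with
  | base =>
    intro hq
    have hnew :
        entry (insertMax n (q + 1) l) (q + 1 + 1) < entry (insertMax n (q + 1) l) (q + 1) := by
      rw [hself, entry_insertMax_succ hp1 le_rfl]
      exact Nat.lt_succ_of_le (hl.entry_le hp1 hq)
    have hold : ¬ (1 ≤ q ∧
        entry (insertMax n (q + 1) l) (q + 1) < entry (insertMax n (q + 1) l) q) := by
      rintro ⟨h1, h2⟩
      rw [hself, entry_insertMax_of_lt h1 (Nat.lt_succ_self q)] at h2
      exact absurd (hl.entry_le h1 (by omega)) (by omega)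
    rw [des_succ, des_succ, des_succ q l, des_insertMax_of_lt (Nat.lt_succ_self q), if_neg hold,
      if_pos ⟨hp1, hnew⟩]
    ring
  | succ m hm ih =>
    intro hmn
    rw [des_succ, des_succ m l, entry_insertMax_succ (i := m + 1) hp1 (by omega),
      entry_insertMax_succ hp1 hm]
    have hm1 : 1 ≤ m := by omega
    simp only [hm1, Nat.le_add_left, true_and]
    have := ih (by omega)
    omega

lemma des_invWord_insertMax (hl : IsPermWord n l)
    (hnd : (insertMax n p l).Nodup) (hp1 : 1 ≤ p) (hp2 : p ≤ n + 1) :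
    des (n + 1) (invWord (n + 1) (insertMax n p l))
      = des n (invWord n l) + if 1 ≤ n ∧ p ≤ pos l n then 1 else 0 := by
  have hp2' : p ≤ l.length + 1 := hl.length_eq ▸ hp2
  have hpos : ∀ v, 1 ≤ v → v ≤ n →
      entry (invWord (n + 1) (insertMax n p l)) v = succAbove p (entry (invWord n l) v) := by
    intro v h1 h2
    rw [entry_invWord h1 (by omega), entry_invWord h1 h2,
      pos_insertMax hnd hp1 hp2' (hl.mem_iff.2 ⟨h1, h2⟩)]
  rw [des_succ, des_congr_of_strictMono (strictMono_succAbove p) hpos]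
  refine congrArg _ (if_congr (and_congr_right fun hn => ?_) rfl rfl)
  rw [hpos n hn le_rfl, entry_invWord (m := n + 1) (by omega) le_rfl,
    pos_insertMax_self hnd hp1 hp2', entry_invWord hn le_rfl, lt_succAbove_iff]

lemma IsBaxter.insertMax_descent_iff_pos_lt (hl : IsPermWord n l)
    (hins : IsBaxter (n + 1) (insertMax n p l)) (hp1 : 1 ≤ p) (hpn : p ≤ n) :
    (2 ≤ p ∧ entry l p < entry l (p - 1)) ↔ pos l n < p := by
  have hn : 1 ≤ n := hp1.trans hpn
  have hk : entry l (pos l n) = n := hl.entry_pos_max hn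
  have hk1 : 1 ≤ pos l n := one_le_pos l _
  have hkn : pos l n ≤ n := hl.pos_le hn le_rfl
  have hself : entry (insertMax n p l) p = n + 1 :=
    entry_insertMax_self hp1 (by rw [hl.length_eq]; omega)
  constructor
  · rintro ⟨hp2, hdesc⟩
    by_contra! hkp
    have hkp' : p < pos l n := by
      refine hkp.lt_of_ne fun h => ?_
      have := hl.entry_le (i := p - 1) (by omega) (by omega)
      have : entry l p = n := h ▸ hk
      omega
    -- `p - 1, p, p + 1, pos l n + 1` is an occurrence of 2-41-3 in the new word
    refine hins.2.2 ⟨p - 1, p, pos l n + 1, by omega, by omega, by omega, by omega, ?_, ?_, ?_⟩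
    · rwa [entry_insertMax_succ hp1 le_rfl, entry_insertMax_of_lt (by omega) (by omega)]
    · rw [entry_insertMax_of_lt (by omega) (by omega), entry_insertMax_succ hp1 hkp, hk]
      exact hl.entry_lt_of_ne_pos (by omega) (by omega) (by omega)
    · rw [entry_insertMax_succ hp1 hkp, hk, hself]
      omega
  · intro hkp
    refine ⟨by omega, ?_⟩
    have hp_lt : entry l p < n := hl.entry_lt_of_ne_pos hp1 hpn (by omega)
    rcases (Nat.le_sub_one_of_lt hkp).eq_or_lt with h | h
    · rwa [← h, hk]
    by_contra! hasc
    have hne : entry l (p - 1) ≠ entry l p := fun he => by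
      have := hl.entry_inj (by omega) (by omega) hp1 hpn he
      omega
    -- `pos l n, p - 1, p, p + 1` is an occurrence of 3-14-2 in the new word
    refine hins.2.1 ⟨pos l n, p - 1, p + 1, hk1, h, by omega, by omega, ?_, ?_, ?_⟩
    · rw [entry_insertMax_of_lt (by omega) (by omega), entry_insertMax_succ hp1 le_rfl]
      omega
    · rwa [entry_insertMax_succ hp1 le_rfl, entry_insertMax_of_lt hk1 hkp, hk]
    · rw [Nat.sub_add_cancel hp1, entry_insertMax_of_lt hk1 hkp, hk, hself]
      omega

lemma des_ides_insertMax_of_lrMaxAt (hl : IsPermWord n l) (hnd : (insertMax n p l).Nodup)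
    (hp1 : 1 ≤ p) (hpn : p ≤ n) (hmax : LRMaxAt l p) :
    des (n + 1) (insertMax n p l) = des n l + 1 ∧
      des (n + 1) (invWord (n + 1) (insertMax n p l)) = des n (invWord n l) + 1 := by
  have hdes := des_insertMax_of_le hl hp1 hpn
  rw [if_neg fun h => (hmax (p - 1) (by omega) (by omega)).not_gt h.2] at hdes
  rw [des_invWord_insertMax hl hnd hp1 (by omega),
    if_pos ⟨hp1.trans hpn, hl.le_pos_of_lrMaxAt hp1 hpn hmax⟩]
  exact ⟨by omega, rfl⟩

lemma des_ides_insertMax_of_rlMaxAt (hl : IsPermWord n l) (hnd : (insertMax n p l).Nodup)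
    (hp : 2 ≤ p) (hp2 : p ≤ n + 1) (hmax : RLMaxAt n l (p - 1)) :
    des (n + 1) (insertMax n p l) = des n l ∧
      des (n + 1) (invWord (n + 1) (insertMax n p l)) = des n (invWord n l) := by
  have hk := hl.pos_le_of_rlMaxAt (i := p - 1) (by omega) (by omega) hmax
  rw [des_invWord_insertMax hl hnd (by omega) hp2, if_neg (by omega)]
  refine ⟨?_, rfl⟩
  rcases hp2.lt_or_eq with hpn | rfl
  · have hdes := des_insertMax_of_le hl (by omega) (Nat.le_of_lt_succ hpn)
    rw [if_pos ⟨hp, hmax p (by omega) (Nat.le_of_lt_succ hpn)⟩] at hdes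
    omega
  · exact des_insertMax_end hl

lemma IsBaxter.des_sub_ides_insertMax (hl : IsPermWord n l)
    (hins : IsBaxter (n + 1) (insertMax n p l)) (hp1 : 1 ≤ p) (hp2 : p ≤ n + 1) :
    (des (n + 1) (insertMax n p l) : ℤ) - des (n + 1) (invWord (n + 1) (insertMax n p l))
      = (des n l : ℤ) - des n (invWord n l) := by
  rw [des_invWord_insertMax hl hins.1.nodup hp1 hp2]
  rcases hp2.lt_or_eq with hpn | rfl
  · have hdes := des_insertMax_of_le hl hp1 (Nat.le_of_lt_succ hpn)
    have hkey := hins.insertMax_descent_iff_pos_lt hl hp1 (Nat.le_of_lt_succ hpn)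
    by_cases hd : 2 ≤ p ∧ entry l p < entry l (p - 1)
    · rw [if_pos hd] at hdes
      rw [if_neg fun h => (hkey.1 hd).not_ge h.2]
      omega
    · rw [if_neg hd] at hdes
      rw [if_pos ⟨by omega, not_lt.1 (mt hkey.2 hd)⟩]
      omega
  · rw [des_insertMax_end hl, if_neg fun h => (hl.pos_le h.1 le_rfl).not_gt h.2, add_zero]

end InsertMax

/-- Inserting a new largest label into a Baxter permutation so that the result
is Baxter preserves the difference between the number of descents and inverse descents;
more precisely, inserting to the left of a left-to-right maximum increases both `des` and
`ides` by one, and inserting to the right of a right-to-left maximum changes neither. -/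
theorem baxter_insertMax_des_ides (n : ℕ) (l : List ℕ) (hl : IsBaxter n l)
    (p : ℕ) (hp1 : 1 ≤ p) (hp2 : p ≤ n + 1)
    (hins : IsBaxter (n + 1) (insertMax n p l)) :
    ((des (n + 1) (insertMax n p l) : ℤ)
        - des (n + 1) (invWord (n + 1) (insertMax n p l))
      = (des n l : ℤ) - des n (invWord n l)) ∧
    (p ≤ n → LRMaxAt l p →
      des (n + 1) (insertMax n p l) = des n l + 1 ∧
      des (n + 1) (invWord (n + 1) (insertMax n p l)) = des n (invWord n l) + 1) ∧
    (2 ≤ p → RLMaxAt n l (p - 1) →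
      des (n + 1) (insertMax n p l) = des n l ∧
      des (n + 1) (invWord (n + 1) (insertMax n p l)) = des n (invWord n l)) := by
  have hperm := hl.1
  exact ⟨hins.des_sub_ides_insertMax hperm hp1 hp2,
    des_ides_insertMax_of_lrMaxAt hperm hins.1.nodup hp1,
    fun hp => des_ides_insertMax_of_rlMaxAt hperm hins.1.nodup hp hp2⟩
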